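/- arXiv:1103.0575 — 3 statements merged into one kernel-verified Lean document; each statement's English description precedes it below -/
import Mathlib

section
/- For every n ∈ ℕ, every 0 ≤ k ≤ l ≤ n and every probability measure P ∈ 𝒫ⁿ_D, one has E^P[(Xⁿ_l − Xⁿ_k)(Xⁿ_l − Xⁿ_k)' | Fⁿ_k] ∈ (l−k)·D := {(l−k)Γ : Γ ∈ D} P-almost surely. -/
open MeasureTheory
open scoped ENNReal

noncomputable section

/-- Column vectors in `ℝ^d` with the Euclidean norm. -/
abbrev Vec (d : ℕ) := EuclideanSpace ℝ (Fin d)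

/-- Real `d × d` matrices. -/
abbrev Mat (d : ℕ) := Matrix (Fin d) (Fin d) ℝ

/-- Operator norm of a matrix, acting on Euclidean space. -/
def matOpNorm {d : ℕ} (A : Mat d) : ℝ :=
  ‖LinearMap.toContinuousLinearMap (Matrix.toEuclideanLin A)‖

/-- `R_D`, the supremum of the operator norms of the elements of `D`. -/
def RD {d : ℕ} (D : Set (Mat d)) : ℝ := sSup (matOpNorm '' D)

/-- `r_D`; note that for a non-invertible `Γ` we have `Γ⁻¹ = 0` (Mathlib's junk value)
and hence `(matOpNorm Γ⁻¹)⁻¹ = 0`, matching the convention `r_D = 0` in that case. -/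
def rD {d : ℕ} (D : Set (Mat d)) : ℝ := sInf ((fun A => (matOpNorm A⁻¹)⁻¹) '' D)

/-- The canonical space `(ℝ^d)^{n+1}` of discrete paths. -/
abbrev PathN (d n : ℕ) := Fin (n + 1) → Vec d

/-- The canonical filtration `F^n_k = σ(X^n_0, …, X^n_k)`. -/
def canonF (d n : ℕ) (k : Fin (n + 1)) : MeasurableSpace (PathN d n) :=
  ⨆ i : Fin (n + 1), ⨆ _ : i ≤ k, MeasurableSpace.comap (fun ω => ω i) inferInstance

/-- `P` is a martingale law on `(ℝ^d)^{n+1}`: the canonical process is a `P`-martingale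
(w.r.t. the canonical filtration) starting at `0` `P`-a.s. -/
def IsMartingaleLaw (d n : ℕ) (P : Measure (PathN d n)) : Prop :=
  IsProbabilityMeasure P ∧
  (∀ᵐ ω ∂P, ω 0 = 0) ∧
  (∀ k, Integrable (fun ω => ω k) P) ∧
  ∀ k l : Fin (n + 1), k ≤ l →
    (P[fun ω => ω l | canonF d n k]) =ᵐ[P] fun ω => ω k

/-- The set `𝒫ⁿ_D` of martingale laws with one-step conditional covariances in `D`
and increments of squared Euclidean length in `[d² r_D, d² R_D]`. -/
def PLaws (d n : ℕ) (D : Set (Mat d)) : Set (Measure (PathN d n)) :=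
  {P | IsMartingaleLaw d n P ∧
    ∀ k : ℕ, ∀ hk : k < n,
      (∀ᵐ ω ∂P,
        (Matrix.of fun i j =>
          (P[fun ω' => (ω' ⟨k + 1, by omega⟩ i - ω' ⟨k, by omega⟩ i) *
                        (ω' ⟨k + 1, by omega⟩ j - ω' ⟨k, by omega⟩ j)
            | canonF d n ⟨k, by omega⟩]) ω) ∈ D) ∧
      (∀ᵐ ω ∂P,
        (d : ℝ) ^ 2 * rD D ≤ ‖ω ⟨k + 1, by omega⟩ - ω ⟨k, by omega⟩‖ ^ 2 ∧
        ‖ω ⟨k + 1, by omega⟩ - ω ⟨k, by omega⟩‖ ^ 2 ≤ (d : ℝ) ^ 2 * RD D)}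

/-!
Write `X_l - X_k` as the sum of the increments `ΔX_{j+1}`, `k ≤ j < l`. Conditioning first on
`F_j`, the martingale property kills the cross terms `E[(X_j - X_k) ΔX_{j+1}' | F_k]`, so the
conditional covariance given `F_k` is the sum of the matrices
`E[E[ΔX_{j+1} ΔX_{j+1}' | F_j] | F_k]`. Each of them lies in `D`, because conditional expectation
preserves closed convex sets, and a sum of `l - k` points of the convex set `D` lies in
`(l - k) • D`. The bounded increments make everything square integrable.
-/

open Matrix Filter
open scoped Pointwise

/-- Matrices carry no global norm in Mathlib, so `μ[G | m]` is unavailable for a matrix-valued `G`;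
we condition entrywise. -/
def condExpMatrix {Ω ι κ : Type*} {m₀ : MeasurableSpace Ω} (m : MeasurableSpace Ω)
    (μ : Measure[m₀] Ω) (G : Ω → Matrix ι κ ℝ) : Ω → Matrix ι κ ℝ :=
  fun ω => Matrix.of fun i j => μ[fun ω' => G ω' i j | m] ω

section CondExpMatrix

variable {Ω ι κ : Type*} [Fintype ι] [Fintype κ] {m m₀ : MeasurableSpace Ω} {μ : Measure Ω}

lemma condExpMatrix_condExpMatrix {m₁ m₂ : MeasurableSpace Ω} (h₁₂ : m₁ ≤ m₂) (h₂ : m₂ ≤ m₀)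
    [SigmaFinite (μ.trim h₂)] (G : Ω → Matrix ι κ ℝ) :
    condExpMatrix m₁ μ (condExpMatrix m₂ μ G) =ᵐ[μ] condExpMatrix m₁ μ G := by
  have h : ∀ᵐ ω ∂μ, ∀ i j, condExpMatrix m₁ μ (condExpMatrix m₂ μ G) ω i j =
      condExpMatrix m₁ μ G ω i j :=
    ae_all_iff.2 fun i => ae_all_iff.2 fun j => condExp_condExp_of_le h₁₂ h₂
  filter_upwards [h] with ω hω using Matrix.ext hω

lemma condExpMatrix_mem (hm : m ≤ m₀) [SigmaFinite (μ.trim hm)] {G : Ω → Matrix ι κ ℝ}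
    (hG : ∀ i j, Integrable (fun ω => G ω i j) μ) {s : Set (Matrix ι κ ℝ)} (hs : IsClosed s)
    (hc : Convex ℝ s) (hGs : ∀ᵐ ω ∂μ, G ω ∈ s) :
    ∀ᵐ ω ∂μ, condExpMatrix m μ G ω ∈ s := by
  set g : Ω → ι → κ → ℝ := fun ω => Matrix.of.symm (G ω)
  have hg : Integrable g μ := Integrable.of_eval fun i => Integrable.of_eval fun j => hG i j
  have hentry : ∀ i j, (fun ω => μ[g | m] ω i j) =ᵐ[μ] μ[fun ω => G ω i j | m] := fun i j =>
    ((ContinuousLinearMap.proj (R := ℝ) (φ := fun _ : κ => ℝ) j).comp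
      (ContinuousLinearMap.proj (R := ℝ) (φ := fun _ : ι => κ → ℝ) i)).comp_condExp_comm hg
  have hmem : ∀ᵐ ω ∂μ, μ[g | m] ω ∈ Matrix.of ⁻¹' s :=
    (hc.linear_preimage (Matrix.ofLinearEquiv ℝ).toLinearMap).condExp_mem hm hg
      (hs.preimage continuous_id) hGs
  filter_upwards [hmem, ae_all_iff.2 fun i => ae_all_iff.2 (hentry i)] with ω hω hωe
  rwa [show condExpMatrix m μ G ω = Matrix.of (μ[g | m] ω) from
    Matrix.ext fun i j => (hωe i j).symm]

end CondExpMatrix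

section Orthogonality

variable {Ω : Type*} {m₁ m₂ m₀ : MeasurableSpace Ω} {μ : Measure Ω} [IsFiniteMeasure μ]

lemma condExp_mul_ae_eq_zero (h₁₂ : m₁ ≤ m₂) (h₂ : m₂ ≤ m₀) {f g : Ω → ℝ}
    (hf : StronglyMeasurable[m₂] f) (hfg : Integrable (f * g) μ) (hg : Integrable g μ)
    (hg0 : μ[g | m₂] =ᵐ[μ] 0) :
    μ[f * g | m₁] =ᵐ[μ] 0 := calc
  μ[f * g | m₁] =ᵐ[μ] μ[μ[f * g | m₂] | m₁] := (condExp_condExp_of_le h₁₂ h₂).symm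
  _ =ᵐ[μ] μ[0 | m₁] := condExp_congr_ae <|
    (condExp_mul_of_stronglyMeasurable_left hf hfg hg).trans (hg0.mono fun ω h => by simp [h])
  _ = 0 := condExp_zero

lemma condExp_add_mul_add_ae_eq (h₁₂ : m₁ ≤ m₂) (h₂ : m₂ ≤ m₀) {f f' g g' : Ω → ℝ}
    (hf : StronglyMeasurable[m₂] f) (hf' : StronglyMeasurable[m₂] f')
    (hf₂ : MemLp f 2 μ) (hf'₂ : MemLp f' 2 μ) (hg₂ : MemLp g 2 μ) (hg'₂ : MemLp g' 2 μ)
    (hg0 : μ[g | m₂] =ᵐ[μ] 0) (hg'0 : μ[g' | m₂] =ᵐ[μ] 0) :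
    μ[(f + g) * (f' + g') | m₁] =ᵐ[μ] μ[f * f' | m₁] + μ[g * g' | m₁] := by
  have hexpand : (f + g) * (f' + g') = (f * f' + g * g') + (f * g' + f' * g) := by ring
  have hcross : μ[f * g' + f' * g | m₁] =ᵐ[μ] 0 := by
    refine (condExp_add (hf₂.integrable_mul hg'₂) (hf'₂.integrable_mul hg₂) m₁).trans ?_
    filter_upwards [condExp_mul_ae_eq_zero h₁₂ h₂ hf (hf₂.integrable_mul hg'₂)
        (hg'₂.integrable one_le_two) hg'0,
      condExp_mul_ae_eq_zero h₁₂ h₂ hf' (hf'₂.integrable_mul hg₂)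
        (hg₂.integrable one_le_two) hg0] with ω h h'
    simp [h, h']
  rw [hexpand]
  filter_upwards [condExp_add ((hf₂.integrable_mul hf'₂).add (hg₂.integrable_mul hg'₂))
      ((hf₂.integrable_mul hg'₂).add (hf'₂.integrable_mul hg₂)) m₁,
    condExp_add (hf₂.integrable_mul hf'₂) (hg₂.integrable_mul hg'₂) m₁, hcross] with ω h h' h''
  simp [h, h', h'']

end Orthogonality

section OuterProduct

variable {Ω ι : Type*} [Fintype ι] {m₁ m₂ m₀ : MeasurableSpace Ω} {μ : Measure Ω}
  [IsFiniteMeasure μ]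

lemma condExpMatrix_vecMulVec_add_ae_eq (h₁₂ : m₁ ≤ m₂) (h₂ : m₂ ≤ m₀)
    {A B : Ω → EuclideanSpace ℝ ι} (hA : StronglyMeasurable[m₂] A) (hA₂ : MemLp A 2 μ)
    (hB₂ : MemLp B 2 μ) (hB0 : μ[B | m₂] =ᵐ[μ] 0) :
    condExpMatrix m₁ μ (fun ω => vecMulVec (A ω + B ω) (A ω + B ω)) =ᵐ[μ]
      condExpMatrix m₁ μ (fun ω => vecMulVec (A ω) (A ω)) +
        condExpMatrix m₁ μ (fun ω => vecMulVec (B ω) (B ω)) := by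
  have hAi (i : ι) : StronglyMeasurable[m₂] fun ω => A ω i :=
    (EuclideanSpace.proj i).continuous.comp_stronglyMeasurable hA
  have hA₂i (i : ι) : MemLp (fun ω => A ω i) 2 μ :=
    (EuclideanSpace.proj (𝕜 := ℝ) i).comp_memLp' hA₂
  have hB₂i (i : ι) : MemLp (fun ω => B ω i) 2 μ :=
    (EuclideanSpace.proj (𝕜 := ℝ) i).comp_memLp' hB₂
  have hB0i (i : ι) : μ[fun ω => B ω i | m₂] =ᵐ[μ] 0 :=
    ((EuclideanSpace.proj i).comp_condExp_comm (hB₂.integrable one_le_two)).symm.trans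
      (hB0.mono fun ω h => by simp [h])
  have h : ∀ᵐ ω ∂μ, ∀ i j,
      condExpMatrix m₁ μ (fun ω => vecMulVec (A ω + B ω) (A ω + B ω)) ω i j =
        (condExpMatrix m₁ μ (fun ω => vecMulVec (A ω) (A ω)) +
          condExpMatrix m₁ μ (fun ω => vecMulVec (B ω) (B ω))) ω i j :=
    ae_all_iff.2 fun i => ae_all_iff.2 fun j =>
      condExp_add_mul_add_ae_eq h₁₂ h₂ (hAi i) (hAi j) (hA₂i i) (hA₂i j) (hB₂i i) (hB₂i j)
        (hB0i i) (hB0i j)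
  filter_upwards [h] with ω hω using Matrix.ext hω

end OuterProduct

section Martingale

variable {Ω ι : Type*} [Fintype ι] {m₀ : MeasurableSpace Ω} {μ : Measure Ω} [IsFiniteMeasure μ]
  {ℱ : Filtration ℕ m₀} {X : ℕ → Ω → EuclideanSpace ℝ ι}

lemma MeasureTheory.Martingale.condExp_sub_ae_eq_zero (hX : Martingale X ℱ μ) {i j : ℕ}
    (hij : i ≤ j) :
    μ[X j - X i | ℱ i] =ᵐ[μ] 0 := by
  filter_upwards [condExp_sub (hX.integrable j) (hX.integrable i) (ℱ i), hX.condExp_ae_eq hij]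
    with ω h h'
  simp [h, h', condExp_of_stronglyMeasurable (ℱ.le i) (hX.stronglyMeasurable i) (hX.integrable i)]

theorem MeasureTheory.Martingale.condExpMatrix_vecMulVec_sub_mem_smul (hX : Martingale X ℱ μ)
    (hX₂ : ∀ j, MemLp (X j) 2 μ) {D : Set (Matrix ι ι ℝ)} (hDne : D.Nonempty)
    (hDc : Convex ℝ D) (hDcl : IsClosed D) {k l : ℕ} (hkl : k ≤ l)
    (hcov : ∀ j, k ≤ j → j < l → ∀ᵐ ω ∂μ,
      condExpMatrix (ℱ j) μ (fun ω => vecMulVec (X (j + 1) ω - X j ω) (X (j + 1) ω - X j ω)) ω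
        ∈ D) :
    ∀ᵐ ω ∂μ, condExpMatrix (ℱ k) μ (fun ω => vecMulVec (X l ω - X k ω) (X l ω - X k ω)) ω ∈
      ((l : ℝ) - k) • D := by
  induction l, hkl using Nat.le_induction with
  | base =>
    refine Eventually.of_forall fun ω => ?_
    rw [sub_self, Set.zero_smul_set hDne, Set.mem_zero]
    exact Matrix.ext fun i j => by simp [condExpMatrix]
  | succ l hkl ih =>
    have hsplit := condExpMatrix_vecMulVec_add_ae_eq (ℱ.mono hkl) (ℱ.le l)
      (A := fun ω => X l ω - X k ω) (B := fun ω => X (l + 1) ω - X l ω)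
      (((hX.stronglyMeasurable l).sub ((hX.stronglyMeasurable k).mono (ℱ.mono hkl))))
      ((hX₂ l).sub (hX₂ k)) ((hX₂ (l + 1)).sub (hX₂ l))
      (hX.condExp_sub_ae_eq_zero l.le_succ)
    have hstep : ∀ᵐ ω ∂μ, condExpMatrix (ℱ k) μ
        (fun ω => vecMulVec (X (l + 1) ω - X l ω) (X (l + 1) ω - X l ω)) ω ∈ D := by
      filter_upwards [condExpMatrix_condExpMatrix (ℱ.mono hkl) (ℱ.le l)
          (fun ω => vecMulVec (X (l + 1) ω - X l ω) (X (l + 1) ω - X l ω)),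
        condExpMatrix_mem (ℱ.le k) (fun i j => integrable_condExp) hDcl hDc
          (hcov l hkl l.lt_succ_self)] with ω h h'
      rwa [← h]
    filter_upwards [ih fun j hj hjl => hcov j hj (hjl.trans l.lt_succ_self), hsplit, hstep]
      with ω h h' h''
    simp only [sub_add_sub_cancel'] at h'
    have hlk : (0 : ℝ) ≤ l - k := sub_nonneg.2 (Nat.cast_le.2 hkl)
    rw [h', Nat.cast_succ, add_sub_right_comm, hDc.add_smul hlk zero_le_one, one_smul]
    exact Set.add_mem_add h h''

end Martingale

lemma ae_norm_le_mul_of_ae_norm_sub_le {Ω E : Type*} [SeminormedAddCommGroup E]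
    {m₀ : MeasurableSpace Ω} {μ : Measure Ω} {X : ℕ → Ω → E} {C : ℝ} (h₀ : ∀ᵐ ω ∂μ, X 0 ω = 0)
    (hstep : ∀ j, ∀ᵐ ω ∂μ, ‖X (j + 1) ω - X j ω‖ ≤ C) (j : ℕ) :
    ∀ᵐ ω ∂μ, ‖X j ω‖ ≤ j * C := by
  induction j with
  | zero => filter_upwards [h₀] with ω h using by simp [h]
  | succ j ih =>
    filter_upwards [ih, hstep j] with ω h h'
    calc ‖X (j + 1) ω‖ ≤ ‖X j ω‖ + ‖X (j + 1) ω - X j ω‖ := norm_le_norm_add_norm_sub' _ _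
      _ ≤ j * C + C := add_le_add h h'
      _ = (j + 1 : ℕ) * C := by push_cast; ring

lemma Fin.clamp_of_le {j n : ℕ} (h : j ≤ n) : Fin.clamp j n = ⟨j, Nat.lt_succ_of_le h⟩ :=
  Fin.ext (min_eq_left h)

section Canonical

variable {d n : ℕ}

lemma canonF_mono : Monotone (canonF d n) := fun _ _ hkl =>
  iSup₂_le fun i hik => le_iSup₂ (f := fun i (_ : i ≤ _) =>
    MeasurableSpace.comap (fun ω : PathN d n => ω i) inferInstance) i (hik.trans hkl)

lemma canonF_le (k : Fin (n + 1)) :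
    canonF d n k ≤ (inferInstance : MeasurableSpace (PathN d n)) :=
  iSup₂_le fun i _ => (measurable_pi_apply i).comap_le

lemma measurable_canonF_apply {i k : Fin (n + 1)} (hik : i ≤ k) :
    Measurable[canonF d n k] fun ω : PathN d n => ω i :=
  measurable_iff_comap_le.2 (le_iSup₂ (f := fun i (_ : i ≤ k) =>
    MeasurableSpace.comap (fun ω : PathN d n => ω i) inferInstance) i hik)

/-- `canonF` and the coordinate process are frozen after time `n`, to be indexed by `ℕ` like the
martingales of the general results. -/
def canonFiltration (d n : ℕ) : Filtration ℕ (inferInstance : MeasurableSpace (PathN d n)) where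
  seq j := canonF d n (Fin.clamp j n)
  mono' _ _ h := canonF_mono (Fin.clamp_monotone h)
  le' j := canonF_le (Fin.clamp j n)

def canonX (d n : ℕ) (j : ℕ) (ω : PathN d n) : Vec d := ω (Fin.clamp j n)

lemma IsMartingaleLaw.martingale {P : Measure (PathN d n)} (hP : IsMartingaleLaw d n P) :
    Martingale (canonX d n) (canonFiltration d n) P :=
  ⟨fun j => (measurable_canonF_apply (d := d) (le_refl (Fin.clamp j n))).stronglyMeasurable,
    fun i j h => hP.2.2.2 (Fin.clamp i n) (Fin.clamp j n) (Fin.clamp_monotone h)⟩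

variable {D : Set (Mat d)} {P : Measure (PathN d n)}

lemma norm_canonX_succ_sub_le (hP : P ∈ PLaws d n D) (j : ℕ) :
    ∀ᵐ ω ∂P, ‖canonX d n (j + 1) ω - canonX d n j ω‖ ≤ √((d : ℝ) ^ 2 * RD D) := by
  rcases lt_or_ge j n with hj | hj
  · filter_upwards [(hP.2 j hj).2] with ω h
    rw [canonX, canonX, Fin.clamp_of_le hj, Fin.clamp_of_le hj.le]
    exact Real.le_sqrt_of_sq_le h.2
  · refine Eventually.of_forall fun ω => ?_
    rw [canonX, canonX, Fin.clamp_eq_last _ _ hj, Fin.clamp_eq_last _ _ (by omega),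
      sub_self, norm_zero]
    exact Real.sqrt_nonneg _

lemma memLp_canonX (hP : P ∈ PLaws d n D) (j : ℕ) : MemLp (canonX d n j) 2 P := by
  have := hP.1.1
  refine MemLp.of_bound (measurable_pi_apply _).aestronglyMeasurable _
    (ae_norm_le_mul_of_ae_norm_sub_le ?_ (norm_canonX_succ_sub_le hP) j)
  filter_upwards [hP.1.2.1] with ω h
  rwa [canonX, Fin.clamp_of_le (Nat.zero_le n)]

lemma condExpMatrix_canonX_mem (hP : P ∈ PLaws d n D) {j : ℕ} (hj : j < n) :
    ∀ᵐ ω ∂P, condExpMatrix (canonFiltration d n j) P (fun ω =>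
      vecMulVec (canonX d n (j + 1) ω - canonX d n j ω)
        (canonX d n (j + 1) ω - canonX d n j ω)) ω ∈ D := by
  change ∀ᵐ ω ∂P, condExpMatrix (canonF d n (Fin.clamp j n)) P (fun ω =>
      vecMulVec (ω (Fin.clamp (j + 1) n) - ω (Fin.clamp j n))
        (ω (Fin.clamp (j + 1) n) - ω (Fin.clamp j n))) ω ∈ D
  rw [Fin.clamp_of_le hj, Fin.clamp_of_le hj.le]
  exact (hP.2 j hj).1

end Canonical

theorem discrete_conditional_covariance_mem_general (d : ℕ)
    (D : Set (Mat d)) (hne : D.Nonempty) (hconv : Convex ℝ D) (hcomp : IsCompact D)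
    (n : ℕ) (k l : Fin (n + 1)) (hkl : k ≤ l)
    (P : Measure (PathN d n)) (hP : P ∈ PLaws d n D) :
    ∀ᵐ ω ∂P,
      (Matrix.of fun i j =>
          (P[fun ω' => (ω' l i - ω' k i) * (ω' l j - ω' k j) | canonF d n k]) ω)
        ∈ (fun A : Mat d => ((((l : ℕ) : ℝ) - ((k : ℕ) : ℝ)) • A)) '' D := by
  have := hP.1.1
  have hl : (l : ℕ) ≤ n := Nat.lt_succ_iff.1 l.isLt
  have h := hP.1.martingale.condExpMatrix_vecMulVec_sub_mem_smul (memLp_canonX hP) hne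
    hconv hcomp.isClosed (Fin.le_def.1 hkl)
    fun j _ hjl => condExpMatrix_canonX_mem hP (hjl.trans_le hl)
  rw [Set.image_smul]
  change ∀ᵐ ω ∂P, condExpMatrix (canonF d n (Fin.clamp k n)) P (fun ω =>
      vecMulVec (ω (Fin.clamp l n) - ω (Fin.clamp k n))
        (ω (Fin.clamp l n) - ω (Fin.clamp k n))) ω ∈ _ at h
  rwa [Fin.clamp_of_le hl, Fin.clamp_of_le ((Fin.le_def.1 hkl).trans hl)] at h

/-- Lemma 3.1(iii): for every `n`, `0 ≤ k ≤ l ≤ n` and `P ∈ 𝒫ⁿ_D`,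
`E^P[(Xⁿ_l − Xⁿ_k)(Xⁿ_l − Xⁿ_k)' | Fⁿ_k] ∈ (l−k)·D` `P`-a.s. -/
theorem discrete_conditional_covariance_mem (d : ℕ)
    (D : Set (Mat d)) (hne : D.Nonempty) (hconv : Convex ℝ D) (hcomp : IsCompact D)
    (hpsd : ∀ A ∈ D, A.PosSemidef)
    (n : ℕ) (k l : Fin (n + 1)) (hkl : k ≤ l)
    (P : Measure (PathN d n)) (hP : P ∈ PLaws d n D) :
    ∀ᵐ ω ∂P,
      (Matrix.of fun i j =>
          (P[fun ω' => (ω' l i - ω' k i) * (ω' l j - ω' k j) | canonF d n k]) ω)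
        ∈ (fun A : Mat d => ((((l : ℕ) : ℝ) - ((k : ℕ) : ℝ)) • A)) '' D :=
  discrete_conditional_covariance_mem_general d D hne hconv hcomp n k l hkl P hP

end
end

section
/- Let D be a nonempty convex subset of the positive semidefinite real d×d matrices. Then D contains a positive definite (i.e., invertible) matrix if and only if ⋂_{Γ∈D} ker Γ = {0}. -/
/-! Among the matrices of `D`, pick one, `Γ`, whose kernel is minimal (kernels are subspaces of a
finite-dimensional space). For positive semidefinite `Γ` and `A`, the midpoint `(Γ + A) / 2 ∈ D`
has kernel `ker Γ ⊓ ker A`, so minimality forces `ker Γ ≤ ker A`. Hence `ker Γ` is the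
intersection of all kernels, and a positive semidefinite matrix with trivial kernel is positive
definite. -/

open Matrix LinearMap
open scoped ComplexOrder

namespace Matrix

variable {n 𝕜 : Type*} [Fintype n] [RCLike 𝕜] {A B : Matrix n n 𝕜}

theorem ker_mulVecLin_real_smul (A : Matrix n n 𝕜) {t : ℝ} (ht : t ≠ 0) :
    ker (t • A).mulVecLin = ker A.mulVecLin := by
  ext x
  simp [ht]

theorem PosSemidef.ker_mulVecLin_add (hA : A.PosSemidef) (hB : B.PosSemidef) :
    ker (A + B).mulVecLin = ker A.mulVecLin ⊓ ker B.mulVecLin := by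
  ext x
  simp only [mem_ker, Submodule.mem_inf, mulVecLin_apply]
  refine ⟨fun h ↦ ?_, fun ⟨hAx, hBx⟩ ↦ by rw [add_mulVec, hAx, hBx, add_zero]⟩
  have hsum : star x ⬝ᵥ A *ᵥ x + star x ⬝ᵥ B *ᵥ x = 0 := by
    rw [← dotProduct_add, ← add_mulVec, h, dotProduct_zero]
  rw [add_eq_zero_iff_of_nonneg (hA.dotProduct_mulVec_nonneg x)
    (hB.dotProduct_mulVec_nonneg x)] at hsum
  exact ⟨(hA.dotProduct_mulVec_zero_iff x).mp hsum.1, (hB.dotProduct_mulVec_zero_iff x).mp hsum.2⟩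

theorem PosSemidef.posDef_iff_ker_mulVecLin_eq_bot [DecidableEq n] (hA : A.PosSemidef) :
    A.PosDef ↔ ker A.mulVecLin = ⊥ := by
  rw [hA.posDef_iff_isUnit, ← mulVec_injective_iff_isUnit, ker_eq_bot]
  rfl

end Matrix

theorem Convex.exists_ker_mulVecLin_le_of_posSemidef {n 𝕜 : Type*} [Fintype n] [RCLike 𝕜]
    {D : Set (Matrix n n 𝕜)} (hne : D.Nonempty) (hconv : Convex ℝ D)
    (hpsd : ∀ A ∈ D, A.PosSemidef) :
    ∃ Γ ∈ D, ∀ A ∈ D, ker Γ.mulVecLin ≤ ker A.mulVecLin := by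
  obtain ⟨_, ⟨Γ, hΓ, rfl⟩, hmin⟩ :=
    wellFounded_lt.has_min ((fun A ↦ ker A.mulVecLin) '' D) (hne.image _)
  refine ⟨Γ, hΓ, fun A hA ↦ ?_⟩
  have hmid : (2⁻¹ : ℝ) • Γ + (2⁻¹ : ℝ) • A ∈ D :=
    hconv hΓ hA (by norm_num) (by norm_num) (by norm_num)
  have hker_mid : ker ((2⁻¹ : ℝ) • Γ + (2⁻¹ : ℝ) • A).mulVecLin =
      ker Γ.mulVecLin ⊓ ker A.mulVecLin := by
    rw [← smul_add, ker_mulVecLin_real_smul _ (by norm_num),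
      (hpsd Γ hΓ).ker_mulVecLin_add (hpsd A hA)]
  have hΓ_eq : ker Γ.mulVecLin ⊓ ker A.mulVecLin = ker Γ.mulVecLin :=
    inf_le_left.eq_of_not_lt (hmin _ ⟨_, hmid, hker_mid⟩)
  exact hΓ_eq ▸ inf_le_right

/-- step 0 of the proof of Proposition 3.8: a nonempty convex set `D` of
positive semidefinite real `d×d` matrices contains a positive definite (equivalently,
invertible) matrix if and only if `⋂_{Γ ∈ D} ker Γ = {0}`. -/
theorem convex_posSemidef_exists_posDef_iff_inter_ker_eq_bot
    {d : ℕ} (D : Set (Matrix (Fin d) (Fin d) ℝ)) (hne : D.Nonempty) (hconv : Convex ℝ D)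
    (hpsd : ∀ A ∈ D, A.PosSemidef) :
    (∃ Γ ∈ D, Γ.PosDef) ↔
      (⋂ Γ ∈ D, {x : Fin d → ℝ | Γ.mulVec x = 0}) = {0} := by
  constructor
  · rintro ⟨Γ, hΓ, hΓ_pd⟩
    have hker := (hpsd Γ hΓ).posDef_iff_ker_mulVecLin_eq_bot.mp hΓ_pd
    refine Set.eq_singleton_iff_unique_mem.mpr ⟨by simp, fun x hx ↦ ?_⟩
    exact (Submodule.eq_bot_iff _).mp hker x (Set.mem_iInter₂.mp hx Γ hΓ)
  · intro hinter
    obtain ⟨Γ, hΓ, hΓ_le⟩ := hconv.exists_ker_mulVecLin_le_of_posSemidef hne hpsd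
    refine ⟨Γ, hΓ, (hpsd Γ hΓ).posDef_iff_ker_mulVecLin_eq_bot.mpr ?_⟩
    refine (Submodule.eq_bot_iff _).mpr fun x hx ↦ ?_
    have hx_inter : x ∈ ⋂ A ∈ D, {x : Fin d → ℝ | A.mulVec x = 0} :=
      Set.mem_iInter₂.mpr fun A hA ↦ hΓ_le A hA hx
    rwa [hinter] at hx_inter
end

section
/- Let D ⊆ S^d_+ be a nonempty, convex, compact set and let Π_D : S^d → D denote the metric projection onto D with respect to the Frobenius (Hilbert–Schmidt) norm ‖·‖_F. Then for every A ∈ S^d and every Γ ∈ D, one has ‖ √(Π_D(A)) − √Γ ‖² ≤ ‖ A − Γ ‖_F, where ‖·‖ is the operator norm and √ denotes the unique positive semidefinite square root of a positive semidefinite matrix. -/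
noncomputable section

/-- Frobenius (Hilbert–Schmidt) norm of a matrix. -/
def frobNorm {d : ℕ} (A : Mat d) : ℝ := Real.sqrt (∑ i, ∑ j, (A i j) ^ 2)

open scoped MatrixOrder

/-! The metric projection onto a convex set of the Hilbert space `(S^d, ‖·‖_F)` makes an obtuse
angle at `Π_D A` with every `Γ ∈ D`, so `‖Π_D A - Γ‖_F ≤ ‖A - Γ‖_F`, and it remains to show
`‖√P - √G‖² ≤ ‖P - G‖_F` for `P, G ⪰ 0`. The operator norm of the symmetric matrix `√P - √G` is
the largest `|μ|` over its eigenvalues. For a unit eigenvector `x` with eigenvalue `μ`, put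
`a = ⟪x, √P x⟫ ≥ 0` and `b = ⟪x, √G x⟫ ≥ 0`; then `μ = a - b` and
`⟪x, (P - G) x⟫ = ⟪√P x - √G x, √P x + √G x⟫ = μ (a + b)`, so
`μ² ≤ |μ| (a + b) = |⟪x, (P - G) x⟫| ≤ ‖P - G‖_F`. -/

open Matrix

section ProjectionOntoConvex

variable {E : Type*} [NormedAddCommGroup E] [InnerProductSpace ℝ E]

theorem norm_sub_le_of_forall_norm_sub_le {K : Set E} (hK : Convex ℝ K) {a p g : E}
    (hp : p ∈ K) (hg : g ∈ K) (hmin : ∀ b ∈ K, ‖a - p‖ ≤ ‖a - b‖) : ‖p - g‖ ≤ ‖a - g‖ := by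
  have : Nonempty K := ⟨⟨p, hp⟩⟩
  have hinf : ‖a - p‖ = ⨅ b : K, ‖a - b‖ :=
    le_antisymm (le_ciInf fun b => hmin b b.2) <|
      ciInf_le (f := fun b : K => ‖a - b‖) ⟨0, by rintro - ⟨b, rfl⟩; positivity⟩ ⟨p, hp⟩
  have hobtuse : inner ℝ (a - p) (g - p) ≤ 0 :=
    (norm_eq_iInf_iff_real_inner_le_zero hK hp).mp hinf g hg
  have hsplit : a - g = (a - p) - (g - p) := by abel
  refine (sq_le_sq₀ (norm_nonneg _) (norm_nonneg _)).mp ?_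
  rw [hsplit, norm_sub_sq_real (a - p), norm_sub_rev p g]
  nlinarith [sq_nonneg ‖a - p‖]

end ProjectionOntoConvex

def flattenEquiv (d : ℕ) : Mat d ≃ₗ[ℝ] EuclideanSpace ℝ (Fin d × Fin d) :=
  (LinearEquiv.curry ℝ ℝ (Fin d) (Fin d)).symm.trans (WithLp.linearEquiv 2 ℝ _).symm

theorem norm_flattenEquiv {d : ℕ} (A : Mat d) : ‖flattenEquiv d A‖ = frobNorm A := by
  rw [EuclideanSpace.norm_eq, frobNorm, ← Fintype.sum_prod_type']
  congr 1
  exact Finset.sum_congr rfl fun p _ => by rw [Real.norm_eq_abs, sq_abs]; rfl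

theorem frobNorm_sub_le_of_forall_frobNorm_sub_le {d : ℕ} {D : Set (Mat d)} (hD : Convex ℝ D)
    {A P Γ : Mat d} (hP : P ∈ D) (hΓ : Γ ∈ D)
    (hmin : ∀ B ∈ D, frobNorm (A - P) ≤ frobNorm (A - B)) :
    frobNorm (P - Γ) ≤ frobNorm (A - Γ) := by
  set e := flattenEquiv d
  have he : ∀ X Y : Mat d, ‖e X - e Y‖ = frobNorm (X - Y) := fun X Y => by
    rw [← map_sub, norm_flattenEquiv]
  have := norm_sub_le_of_forall_norm_sub_le (hD.linear_image e.toLinearMap) (a := e A)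
    ⟨P, hP, rfl⟩ ⟨Γ, hΓ, rfl⟩ (by rintro - ⟨B, hB, rfl⟩; simpa [he] using hmin B hB)
  simpa only [LinearEquiv.coe_coe, he] using this

theorem abs_dotProduct_mulVec_le_frobNorm {d : ℕ} (M : Mat d) {x : Fin d → ℝ}
    (hx : x ⬝ᵥ x = 1) : |x ⬝ᵥ (M *ᵥ x)| ≤ frobNorm M := by
  have hquad : x ⬝ᵥ (M *ᵥ x) = ∑ p : Fin d × Fin d, M p.1 p.2 * (x p.1 * x p.2) := by
    simp only [dotProduct, mulVec, Fintype.sum_prod_type, Finset.mul_sum]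
    exact Finset.sum_congr rfl fun i _ => Finset.sum_congr rfl fun j _ => by ring
  have hunit : ∑ p : Fin d × Fin d, (x p.1 * x p.2) ^ 2 = 1 := by
    simp only [mul_pow, Fintype.sum_prod_type, ← Finset.sum_mul_sum, ← pow_two]
    simp only [dotProduct, ← pow_two] at hx
    rw [hx, one_pow]
  refine Real.abs_le_sqrt ?_
  calc (x ⬝ᵥ (M *ᵥ x)) ^ 2
      ≤ (∑ p : Fin d × Fin d, M p.1 p.2 ^ 2) * ∑ p : Fin d × Fin d, (x p.1 * x p.2) ^ 2 := by
        rw [hquad]; exact Finset.sum_mul_sq_le_sq_mul_sq _ _ _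
    _ = ∑ i, ∑ j, M i j ^ 2 := by rw [hunit, mul_one, Fintype.sum_prod_type]

theorem sq_le_abs_dotProduct_mul_self_sub_mul_self {n : Type*} [Fintype n] {S T : Matrix n n ℝ}
    (hS : S.PosSemidef) (hT : T.PosSemidef) {x : n → ℝ} (hx : x ⬝ᵥ x = 1) {μ : ℝ}
    (hμ : (S - T) *ᵥ x = μ • x) : μ ^ 2 ≤ |x ⬝ᵥ ((S * S - T * T) *ᵥ x)| := by
  set a := x ⬝ᵥ (S *ᵥ x)
  set b := x ⬝ᵥ (T *ᵥ x)
  have ha : 0 ≤ a := by simpa using hS.dotProduct_mulVec_nonneg x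
  have hb : 0 ≤ b := by simpa using hT.dotProduct_mulVec_nonneg x
  have hμab : μ = a - b := by
    have := congrArg (x ⬝ᵥ ·) hμ
    simp only [sub_mulVec, dotProduct_sub, dotProduct_smul, hx, smul_eq_mul, mul_one] at this
    exact this.symm
  have hself : ∀ {U : Matrix n n ℝ}, U.IsHermitian →
      x ⬝ᵥ ((U * U) *ᵥ x) = (U *ᵥ x) ⬝ᵥ (U *ᵥ x) := fun hU => by
    rw [← mulVec_mulVec, dotProduct_mulVec, ← vecMul_transpose,
      ← conjTranspose_eq_transpose_of_trivial, hU.eq]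
  have hfactor : x ⬝ᵥ ((S * S - T * T) *ᵥ x) = μ * (a + b) := by
    have hdiff : S *ᵥ x - T *ᵥ x = μ • x := by rw [← sub_mulVec, hμ]
    rw [sub_mulVec, dotProduct_sub, hself hS.1, hself hT.1]
    calc (S *ᵥ x) ⬝ᵥ (S *ᵥ x) - (T *ᵥ x) ⬝ᵥ (T *ᵥ x)
        = (S *ᵥ x - T *ᵥ x) ⬝ᵥ (S *ᵥ x + T *ᵥ x) := by
          rw [sub_dotProduct, dotProduct_add, dotProduct_add,
            dotProduct_comm (S *ᵥ x) (T *ᵥ x)]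
          ring
      _ = μ * (a + b) := by rw [hdiff, smul_dotProduct, dotProduct_add, smul_eq_mul]
  rw [hfactor, abs_mul, abs_of_nonneg (add_nonneg ha hb), hμab, sq, ← abs_mul_abs_self]
  have hab : |a - b| ≤ a + b :=
    abs_sub_le_of_nonneg_of_le ha (le_add_of_nonneg_right hb) hb (le_add_of_nonneg_left ha)
  exact mul_le_mul_of_nonneg_left hab (abs_nonneg _)

theorem matOpNorm_le_of_abs_eigenvalues_le {d : ℕ} {C : Mat d} (hC : C.IsHermitian) {r : ℝ}
    (hr : 0 ≤ r) (h : ∀ i, |hC.eigenvalues i| ≤ r) : matOpNorm C ≤ r := by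
  set T := LinearMap.toContinuousLinearMap (toEuclideanLin C)
  have hT : IsSelfAdjoint T :=
    ContinuousLinearMap.isSelfAdjoint_iff_isSymmetric.mpr (isSymmetric_toEuclideanLin_iff.mpr hC)
  have hspec : spectrum ℝ T = Set.range hC.eigenvalues := by
    rw [ContinuousLinearMap.spectrum_eq, LinearMap.coe_toContinuousLinearMap,
      ← hC.spectrum_real_eq_range_eigenvalues]
    exact spectrum_toLpLin 2
  suffices (‖T‖₊ : ENNReal) ≤ r.toNNReal from
    (Real.le_toNNReal_iff_coe_le hr).mp (ENNReal.coe_le_coe.mp this)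
  rw [← T.spectralRadius_eq_nnnorm hT, spectralRadius, hspec]
  refine iSup₂_le fun _ ⟨i, hi⟩ => hi ▸ ?_
  exact_mod_cast (Real.le_toNNReal_iff_coe_le hr).mpr (by simpa using h i)

theorem matOpNorm_sqrt_sub_sqrt_sq_le_frobNorm {d : ℕ} {P G : Mat d} (hP : P.PosSemidef)
    (hG : G.PosSemidef) : matOpNorm (CFC.sqrt P - CFC.sqrt G) ^ 2 ≤ frobNorm (P - G) := by
  have hS : (CFC.sqrt P).PosSemidef := nonneg_iff_posSemidef.mp (CFC.sqrt_nonneg P)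
  have hT : (CFC.sqrt G).PosSemidef := nonneg_iff_posSemidef.mp (CFC.sqrt_nonneg G)
  have hC : (CFC.sqrt P - CFC.sqrt G).IsHermitian := hS.1.sub hT.1
  have heig : ∀ i, hC.eigenvalues i ^ 2 ≤ frobNorm (P - G) := fun i => by
    set x := ⇑(hC.eigenvectorBasis i)
    have hx : x ⬝ᵥ x = 1 :=
      calc x ⬝ᵥ x = inner ℝ (hC.eigenvectorBasis i) (hC.eigenvectorBasis i) := by
            rw [EuclideanSpace.inner_eq_star_dotProduct, star_trivial]
        _ = 1 := by rw [real_inner_self_eq_norm_sq, hC.eigenvectorBasis.orthonormal.1 i, one_pow]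
    calc hC.eigenvalues i ^ 2
        ≤ |x ⬝ᵥ ((CFC.sqrt P * CFC.sqrt P - CFC.sqrt G * CFC.sqrt G) *ᵥ x)| :=
          sq_le_abs_dotProduct_mul_self_sub_mul_self hS hT hx (hC.mulVec_eigenvectorBasis i)
      _ = |x ⬝ᵥ ((P - G) *ᵥ x)| := by
          rw [CFC.sqrt_mul_sqrt_self P hP.nonneg, CFC.sqrt_mul_sqrt_self G hG.nonneg]
      _ ≤ frobNorm (P - G) := abs_dotProduct_mulVec_le_frobNorm _ hx
  have := matOpNorm_le_of_abs_eigenvalues_le hC (Real.sqrt_nonneg _) fun i =>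
    Real.abs_le_sqrt (heig i)
  exact (Real.le_sqrt (norm_nonneg _) (Real.sqrt_nonneg _)).mp this

theorem sqrt_proj_dist_le_frobenius_general
    {d : ℕ} (D : Set (Mat d)) (hconv : Convex ℝ D)
    (hpsd : ∀ A ∈ D, A.PosSemidef)
    (A : Mat d)
    (PA : Mat d) (hPA : PA ∈ D)
    (hproj : ∀ B ∈ D, frobNorm (A - PA) ≤ frobNorm (A - B))
    (Γ : Mat d) (hΓ : Γ ∈ D) :
    matOpNorm (CFC.sqrt PA - CFC.sqrt Γ) ^ 2 ≤ frobNorm (A - Γ) :=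
  calc matOpNorm (CFC.sqrt PA - CFC.sqrt Γ) ^ 2
      ≤ frobNorm (PA - Γ) := matOpNorm_sqrt_sub_sqrt_sq_le_frobNorm (hpsd PA hPA) (hpsd Γ hΓ)
    _ ≤ frobNorm (A - Γ) := frobNorm_sub_le_of_forall_frobNorm_sub_le hconv hPA hΓ hproj

/-- step 4 of the proof of Proposition 3.8: if `Π_D A` is the metric
projection (w.r.t. the Frobenius norm) of a symmetric matrix `A` onto the nonempty convex
compact set `D ⊆ S^d_+`, then for every `Γ ∈ D`,
`‖√(Π_D A) − √Γ‖² ≤ ‖A − Γ‖_F` (operator norm on the left). -/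
theorem sqrt_proj_dist_le_frobenius
    {d : ℕ} (D : Set (Mat d)) (hne : D.Nonempty) (hconv : Convex ℝ D) (hcomp : IsCompact D)
    (hpsd : ∀ A ∈ D, A.PosSemidef)
    (A : Mat d) (hA : A.IsSymm)
    (PA : Mat d) (hPA : PA ∈ D)
    (hproj : ∀ B ∈ D, frobNorm (A - PA) ≤ frobNorm (A - B))
    (Γ : Mat d) (hΓ : Γ ∈ D) :
    matOpNorm (CFC.sqrt PA - CFC.sqrt Γ) ^ 2 ≤ frobNorm (A - Γ) :=
  sqrt_proj_dist_le_frobenius_general D hconv hpsd A PA hPA hproj Γ hΓ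

end
end
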